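/- arXiv:2302.05502 — 3 statements merged into one kernel-verified Lean document; each statement's English description precedes it below -/
import Mathlib

section
/- Assume M^s(ω) is a C^k stable manifold of the random delayed partial differential equation dv/dt = Av − μv + Lv_t + Lz(θ_{t+·}ω) + f(v_t + z(θ_{t+·}ω)) + Az(θ_tω) on 𝓛, and that ω ↦ z(θ_·ω) takes values in 𝓛 (the translated graph map being C^k). Then M̃^s(ω) := {ψ + z(θ_·ω) : ψ ∈ M^s(ω)} is a C^k stable manifold of the stochastic retarded partial differential equation du/dt = Au − μu + Lu_t + f(u_t) + Σ_{j=1}^m g_j dw_j/dt on 𝓛; that is, M̃^s(ω) is invariant under the stochastic solution map and is the graph of a C^k function over P₁P^sN^s(ω). -/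
open MeasureTheory Set Filter
open scoped Topology NNReal

noncomputable section

/-- A strongly continuous semigroup of bounded linear operators. -/
def IsC0Semigroup {E : Type*} [NormedAddCommGroup E] [NormedSpace ℝ E]
    (T : ℝ → E →L[ℝ] E) : Prop :=
  T 0 = ContinuousLinearMap.id ℝ E ∧
    (∀ s t : ℝ, 0 ≤ s → 0 ≤ t → T (s + t) = (T s).comp (T t)) ∧
    ∀ x : E, ContinuousOn (fun t => T t x) (Ici (0 : ℝ))

/-- if `M^s(ω)` is a `C^k` stable manifold of the random delayed PDE
(the graph of a `C^k` map `h^s(·,ω)` over `P₁P^sN^s(ω)`), then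
`M̃^s(ω) = {ψ + z(θ_·ω) : ψ ∈ M^s(ω)}` is a `C^k` stable manifold of the stochastic
retarded PDE `du/dt = Au - μu + Lu_t + f(u_t) + Σ g_j dw_j/dt`: it is invariant under
the stochastic solution map and is the graph of a `C^k` function over the translate
of `P₁P^sN^s(ω)`. -/
theorem stmt7
    {𝕏 : Type*} [NormedAddCommGroup 𝕏] [InnerProductSpace ℝ 𝕏] [CompleteSpace 𝕏]
    [SecondCountableTopology 𝕏]
    (τ μ : ℝ) (hτ : 0 < τ) (hμ : 0 < μ)
    (ν : Measure ℝ) (hν : ν = volume.restrict (Icc (-τ) 0))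
    (L : Lp 𝕏 2 ν →L[ℝ] 𝕏)
    (St : ℝ → (Lp 𝕏 2 ν × 𝕏) →L[ℝ] (Lp 𝕏 2 ν × 𝕏)) (hSt : IsC0Semigroup St)
    -- dichotomy projections (Hypotheses A1–A3)
    (Pu Ps : (Lp 𝕏 2 ν × 𝕏) →L[ℝ] (Lp 𝕏 2 ν × 𝕏))
    (hPs : Ps = ContinuousLinearMap.id ℝ _ - Pu) (hPproj : Pu.comp Pu = Pu)
    (hPcomm : ∀ t ≥ (0:ℝ), (St t).comp Pu = Pu.comp (St t))
    -- the metric dynamical system and the Ornstein–Uhlenbeck process z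
    {Ω : Type*} [MeasurableSpace Ω] (P : Measure Ω) [IsProbabilityMeasure P]
    (m : ℕ) (θ : ℝ → Ω → Ω)
    (hθ0 : θ 0 = id) (hθadd : ∀ s t : ℝ, θ (s + t) = θ s ∘ θ t)
    (hθmp : ∀ t, MeasurePreserving (θ t) P P)
    (W : Ω → ℝ → Fin m → ℝ)
    (hW0 : ∀ ω, W ω 0 = 0) (hWcont : ∀ ω, Continuous (W ω))
    (hWshift : ∀ t ω s, W (θ t ω) s = W ω (s + t) - W ω t)
    (g : Fin m → 𝕏) (zX : Ω → 𝕏)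
    (hzX : ∀ ω, zX ω =
      ∑ j : Fin m, (-μ * ∫ s in Iic (0:ℝ), Real.exp (μ * s) * W ω s j) • g j)
    (zSeg : ℝ → Ω → Lp 𝕏 2 ν)
    (hzSeg : ∀ t ω, ⇑(zSeg t ω) =ᵐ[ν] fun ξ => zX (θ (t + ξ) ω))
    (Az : ℝ → Ω → 𝕏)
    -- Hypothesis A4 and the nonlinearity F
    (f : Lp 𝕏 2 ν → 𝕏) (Lf : ℝ≥0) (hf : LipschitzWith Lf f) (hf0 : f 0 = 0)
    (F : ℝ → Ω → (Lp 𝕏 2 ν × 𝕏) → (Lp 𝕏 2 ν × 𝕏))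
    (hF : ∀ t ω V, F t ω V = (0, L (zSeg t ω) + f (V.1 + zSeg t ω) + Az t ω))
    -- the mild-solution cocycle V of the auxiliary equation
    (V : Ω → (Lp 𝕏 2 ν × 𝕏) → ℝ → (Lp 𝕏 2 ν × 𝕏))
    (hV : ∀ ω ψ, ContinuousOn (V ω ψ) (Ici 0) ∧ V ω ψ 0 = ψ ∧
      ∀ t ≥ (0:ℝ), V ω ψ t = St t ψ + ∫ s in (0:ℝ)..t, St (t - s) (F s ω (V ω ψ s)))
    (hVcoc : ∀ ω ψ s t, 0 ≤ s → 0 ≤ t → V ω ψ (t + s) = V (θ s ω) (V ω ψ s) t)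
    -- N^s(ω) and the C^k stable manifold M^s(ω) = {ζ + h^s(ζ,ω)} of the random PDE
    (η : ℝ) (Ns : Ω → Set (Lp 𝕏 2 ν × 𝕏))
    (hNs : ∀ ω, Ns ω = {ψ | ∃ C : ℝ, ∀ t ≥ (0:ℝ), ‖V ω ψ t‖ ≤ C * Real.exp (η * t)})
    (k : ℕ) (hk : 1 ≤ k)
    (hs : Ω → Lp 𝕏 2 ν → Lp 𝕏 2 ν)
    (hhs0 : ∀ ω, hs ω 0 = 0)
    (hhsCk : ∀ ω, ContDiffOn ℝ k (hs ω) (Prod.fst '' (⇑Ps '' Ns ω)))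
    (hgraph : ∀ ω, Prod.fst '' Ns ω =
      {x : Lp 𝕏 2 ν | ∃ ζ ∈ Prod.fst '' (⇑Ps '' Ns ω), x = ζ + hs ω ζ})
    (hinv : ∀ ω, ∀ ψ ∈ Ns ω, ∀ t ≥ (0:ℝ), (V ω ψ t).1 ∈ Prod.fst '' Ns (θ t ω))
    -- the splitting z(θ_·ω) = z₁ + z₂ along 𝓛 ∩ P^sH and 𝓛 ∩ P^uH
    (z₁ z₂ : Ω → Lp 𝕏 2 ν)
    (hsplit : ∀ ω, zSeg 0 ω = z₁ ω + z₂ ω ∧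
      z₁ ω ∈ Prod.fst '' (range ⇑Ps) ∧ z₂ ω ∈ Prod.fst '' (range ⇑Pu)) :
    -- M̃^s(ω) = (· + z(θ_·ω)) '' M^s(ω) is invariant under the stochastic solution map
    (∀ ω, ∀ ψ ∈ Ns ω, ∀ t ≥ (0:ℝ),
      (V ω ψ t).1 + zSeg t ω ∈
        (fun x => x + zSeg 0 (θ t ω)) '' (Prod.fst '' Ns (θ t ω))) ∧
    -- and it is the graph of a C^k function over the translated base
    ∀ ω,
      ((fun x => x + zSeg 0 ω) '' (Prod.fst '' Ns ω) =
        {x : Lp 𝕏 2 ν | ∃ ζb ∈ (fun ζ => ζ + z₁ ω) '' (Prod.fst '' (⇑Ps '' Ns ω)),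
          x = ζb + (hs ω (ζb - z₁ ω) + z₂ ω)}) ∧
      ContDiffOn ℝ k (fun ζb => hs ω (ζb - z₁ ω) + z₂ ω)
        ((fun ζ => ζ + z₁ ω) '' (Prod.fst '' (⇑Ps '' Ns ω))) := by
  have hzshift : ∀ t ω, zSeg t ω = zSeg 0 (θ t ω) := by
    intro t ω
    apply Lp.ext
    refine (hzSeg t ω).trans (Filter.EventuallyEq.trans ?_ (hzSeg 0 (θ t ω)).symm)
    filter_upwards with ξ
    have : θ (0 + ξ) (θ t ω) = θ (t + ξ) ω := by
      have h1 : θ (ξ + t) ω = θ ξ (θ t ω) := congrFun (hθadd ξ t) ω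
      rw [hθadd 0 ξ, hθ0]
      simp only [Function.comp_apply, id_eq]
      rw [← h1, add_comm t ξ]
    rw [this]
  constructor
  · intro ω ψ hψ t ht
    rw [hzshift t ω]
    exact ⟨(V ω ψ t).1, hinv ω ψ hψ t ht, rfl⟩
  · intro ω
    obtain ⟨hz12, hz1, hz2⟩ := hsplit ω
    constructor
    · rw [hgraph ω, hz12]
      ext x
      constructor
      · rintro ⟨y, hy, rfl⟩
        obtain ⟨ζ, hζ, rfl⟩ := hy
        exact ⟨ζ + z₁ ω, ⟨ζ, hζ, rfl⟩,
          by simp only [add_sub_cancel_right]; abel⟩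
      · rintro ⟨ζb, ⟨ζ, hζ, rfl⟩, rfl⟩
        exact ⟨ζ + hs ω ζ, ⟨ζ, hζ, rfl⟩,
          by simp only [add_sub_cancel_right]; abel⟩
    · have h1 : ContDiffOn ℝ k (fun ζb => hs ω (ζb - z₁ ω))
          ((fun ζ => ζ + z₁ ω) '' (Prod.fst '' (⇑Ps '' Ns ω))) := by
        refine (hhsCk ω).comp ?_ ?_
        · exact (contDiff_id.sub contDiff_const).contDiffOn
        · rintro x ⟨ζ, hζ, rfl⟩
          simpa using hζ
      exact h1.add contDiffOn_const
end
end

section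
/- Assume M^u(ω) is a Lipschitz unstable manifold of the random delayed partial differential equation dv/dt = Av − μv + Lv_t + Lz(θ_{t+·}ω) + f(v_t + z(θ_{t+·}ω)) + Az(θ_tω) on 𝓛. Then M̃^u(ω) := {ψ + z(θ_·ω) : ψ ∈ M^u(ω)} is a Lipschitz unstable manifold of the stochastic retarded partial differential equation du/dt = Au − μu + Lu_t + f(u_t) + Σ_{j=1}^m g_j dw_j/dt on 𝓛. Moreover, if M^u(ω) is C^k and ω ↦ z(θ_·ω) is C^k on 𝓛, then M̃^u(ω) is a C^k unstable manifold of the stochastic retarded partial differential equation on 𝓛. -/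
/-!
The change of variables `u = v + z(θ_·ω)` is, at each fibre `ω`, a translation of the phase
space by the stationary segment `z(θ_·ω)`. Translations carry invariant sets to invariant sets
and graphs to graphs, with the same Lipschitz constant and the same smoothness. Splitting the
translation vector as `z₁ + z₂` along the dichotomy, the translated graph sits over the base
shifted by `z₁`, with graph map `ζ ↦ h^u(ζ - z₁, ω) + z₂`.
-/

open MeasureTheory Set Filter
open scoped Topology NNReal

noncomputable section

theorem segment_eq_segment_zero_flow {Ω E : Type*} [NormedAddCommGroup E] {p : ENNReal}
    {ν : Measure ℝ} {θ : ℝ → Ω → Ω} (hθadd : ∀ s t : ℝ, θ (s + t) = θ s ∘ θ t)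
    {zX : Ω → E} {zSeg : ℝ → Ω → Lp E p ν}
    (hzSeg : ∀ t ω, ⇑(zSeg t ω) =ᵐ[ν] fun ξ => zX (θ (t + ξ) ω)) (t : ℝ) (ω : Ω) :
    zSeg t ω = zSeg 0 (θ t ω) := by
  have hflow : ∀ ξ, θ (0 + ξ) (θ t ω) = θ (t + ξ) ω := fun ξ => by
    rw [zero_add, add_comm, hθadd, Function.comp_apply]
  refine Lp.ext ((hzSeg t ω).trans ((hzSeg 0 (θ t ω)).trans ?_).symm)
  exact Eventually.of_forall fun ξ => congrArg zX (hflow ξ)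

section Translate

variable {E F : Type*}

theorem mapsTo_sub_const_image_add_const [AddGroup E] (s : Set E) (a : E) :
    MapsTo (fun x => x - a) ((fun x => x + a) '' s) s := by
  rintro _ ⟨x, hx, rfl⟩
  simpa using hx

theorem image_add_const_graph [AddCommGroup E] (s : Set E) (h : E → E) (a b : E) :
    (fun x => x + (a + b)) '' {x | ∃ ζ ∈ s, x = ζ + h ζ} =
      {x | ∃ ζ ∈ (fun ζ => ζ + a) '' s, x = ζ + (h (ζ - a) + b)} := by
  ext x
  constructor
  · rintro ⟨_, ⟨ζ, hζ, rfl⟩, rfl⟩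
    exact ⟨ζ + a, mem_image_of_mem _ hζ, by simp only [add_sub_cancel_right]; abel⟩
  · rintro ⟨_, ⟨ζ, hζ, rfl⟩, rfl⟩
    exact ⟨ζ + h ζ, ⟨ζ, hζ, rfl⟩, by simp only [add_sub_cancel_right]; abel⟩

theorem LipschitzOnWith.comp_sub_const_add_const [SeminormedAddCommGroup E]
    [SeminormedAddCommGroup F] {K : ℝ≥0} {h : E → F} {s : Set E}
    (hh : LipschitzOnWith K h s) (a : E) (b : F) :
    LipschitzOnWith K (fun x => h (x - a) + b) ((fun x => x + a) '' s) := by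
  intro x hx y hy
  rw [edist_add_right, ← edist_sub_right x y a]
  exact hh (mapsTo_sub_const_image_add_const s a hx) (mapsTo_sub_const_image_add_const s a hy)

theorem ContDiffOn.comp_sub_const_add_const {𝕜 : Type*} [NontriviallyNormedField 𝕜]
    [NormedAddCommGroup E] [NormedSpace 𝕜 E] [NormedAddCommGroup F] [NormedSpace 𝕜 F]
    {n : WithTop ℕ∞} {h : E → F} {s : Set E} (hh : ContDiffOn 𝕜 n h s) (a : E) (b : F) :
    ContDiffOn 𝕜 n (fun x => h (x - a) + b) ((fun x => x + a) '' s) :=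
  (hh.comp (contDiffOn_id.sub contDiffOn_const)
    (mapsTo_sub_const_image_add_const s a)).add contDiffOn_const

end Translate

theorem stmt10_general
    {𝕏 : Type*} [NormedAddCommGroup 𝕏] [InnerProductSpace ℝ 𝕏]
    (ν : Measure ℝ)
    (L : Lp 𝕏 2 ν →L[ℝ] 𝕏)
    -- dichotomy projections (Hypotheses A1–A3)
    (Pu Ps : (Lp 𝕏 2 ν × 𝕏) →L[ℝ] (Lp 𝕏 2 ν × 𝕏))
    -- the metric dynamical system and the Ornstein–Uhlenbeck process z
    {Ω : Type*}
    (θ : ℝ → Ω → Ω)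
    (hθadd : ∀ s t : ℝ, θ (s + t) = θ s ∘ θ t)
    (zX : Ω → 𝕏)
    (zSeg : ℝ → Ω → Lp 𝕏 2 ν)
    (hzSeg : ∀ t ω, ⇑(zSeg t ω) =ᵐ[ν] fun ξ => zX (θ (t + ξ) ω))
    -- the forward mild-solution cocycle V of the auxiliary equation
    (V : Ω → (Lp 𝕏 2 ν × 𝕏) → ℝ → (Lp 𝕏 2 ν × 𝕏))
    -- N^u(ω) and the Lipschitz unstable manifold M^u(ω) = P₁N^u(ω) of the random PDE
    (Nu : Ω → Set (Lp 𝕏 2 ν × 𝕏))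
    (hu : Ω → Lp 𝕏 2 ν → Lp 𝕏 2 ν) (Chu : ℝ≥0)
    (hhuLip : ∀ ω, LipschitzOnWith Chu (hu ω) (Prod.fst '' (⇑Pu '' Nu ω)))
    (hgraph : ∀ ω, Prod.fst '' Nu ω =
      {x : Lp 𝕏 2 ν | ∃ ζ ∈ Prod.fst '' (⇑Pu '' Nu ω), x = ζ + hu ω ζ})
    (hinv : ∀ ω, ∀ ψ ∈ Nu ω, ∀ t ≥ (0:ℝ), (V ω ψ t).1 ∈ Prod.fst '' Nu (θ t ω))
    -- the splitting z(θ_·ω) = z₁ + z₂ along 𝓛 ∩ P^uH and 𝓛 ∩ P^sH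
    (z₁ z₂ : Ω → Lp 𝕏 2 ν)
    (hsplit : ∀ ω, zSeg 0 ω = z₁ ω + z₂ ω ∧
      z₁ ω ∈ Prod.fst '' (range ⇑Pu) ∧ z₂ ω ∈ Prod.fst '' (range ⇑Ps)) :
    -- M̃^u(ω) = (· + z(θ_·ω)) '' M^u(ω) is invariant under the stochastic solution map
    (∀ ω, ∀ ψ ∈ Nu ω, ∀ t ≥ (0:ℝ),
      (V ω ψ t).1 + zSeg t ω ∈
        (fun x => x + zSeg 0 (θ t ω)) '' (Prod.fst '' Nu (θ t ω))) ∧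
    -- it is the graph of a Lipschitz function over the translated base
    (∃ C' : ℝ≥0, ∀ ω,
      ((fun x => x + zSeg 0 ω) '' (Prod.fst '' Nu ω) =
        {x : Lp 𝕏 2 ν | ∃ ζb ∈ (fun ζ => ζ + z₁ ω) '' (Prod.fst '' (⇑Pu '' Nu ω)),
          x = ζb + (hu ω (ζb - z₁ ω) + z₂ ω)}) ∧
      LipschitzOnWith C' (fun ζb => hu ω (ζb - z₁ ω) + z₂ ω)
        ((fun ζ => ζ + z₁ ω) '' (Prod.fst '' (⇑Pu '' Nu ω)))) ∧
    -- and if h^u(·,ω) is C^k then the translated graph map is C^k as well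
    (∀ k : ℕ, 1 ≤ k →
      (∀ ω, ContDiffOn ℝ k (hu ω) (Prod.fst '' (⇑Pu '' Nu ω))) →
      ∀ ω, ContDiffOn ℝ k (fun ζb => hu ω (ζb - z₁ ω) + z₂ ω)
        ((fun ζ => ζ + z₁ ω) '' (Prod.fst '' (⇑Pu '' Nu ω)))) := by
  refine ⟨fun ω ψ hψ t ht => ?_, ⟨Chu, fun ω => ⟨?_, ?_⟩⟩, fun k _ hCk ω => ?_⟩
  · rw [segment_eq_segment_zero_flow hθadd hzSeg t ω]
    exact mem_image_of_mem _ (hinv ω ψ hψ t ht)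
  · rw [hgraph ω, (hsplit ω).1]
    exact image_add_const_graph _ (hu ω) (z₁ ω) (z₂ ω)
  · exact (hhuLip ω).comp_sub_const_add_const (z₁ ω) (z₂ ω)
  · exact (hCk ω).comp_sub_const_add_const (z₁ ω) (z₂ ω)

/-- if `M^u(ω) = {ζ + h^u(ζ,ω) : ζ ∈ P₁P^uN^u(ω)}` is a Lipschitz
unstable manifold of the random delayed PDE, then `M̃^u(ω) = {ψ + z(θ_·ω) : ψ ∈ M^u(ω)}`
is a Lipschitz unstable manifold of the stochastic retarded PDE
`du/dt = Au - μu + Lu_t + f(u_t) + Σ g_j dw_j/dt`; moreover, if `M^u(ω)` is `C^k` and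
`ω ↦ z(θ_·ω)` is `C^k` on `𝓛`, then `M̃^u(ω)` is a `C^k` unstable manifold of the
stochastic retarded PDE. -/
theorem stmt10
    {𝕏 : Type*} [NormedAddCommGroup 𝕏] [InnerProductSpace ℝ 𝕏] [CompleteSpace 𝕏]
    [SecondCountableTopology 𝕏]
    (τ μ : ℝ) (hτ : 0 < τ) (hμ : 0 < μ)
    (ν : Measure ℝ) (hν : ν = volume.restrict (Icc (-τ) 0))
    (L : Lp 𝕏 2 ν →L[ℝ] 𝕏)
    (St : ℝ → (Lp 𝕏 2 ν × 𝕏) →L[ℝ] (Lp 𝕏 2 ν × 𝕏)) (hSt : IsC0Semigroup St)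
    -- dichotomy projections (Hypotheses A1–A3)
    (Pu Ps : (Lp 𝕏 2 ν × 𝕏) →L[ℝ] (Lp 𝕏 2 ν × 𝕏))
    (hPs : Ps = ContinuousLinearMap.id ℝ _ - Pu) (hPproj : Pu.comp Pu = Pu)
    (hPcomm : ∀ t ≥ (0:ℝ), (St t).comp Pu = Pu.comp (St t))
    -- the metric dynamical system and the Ornstein–Uhlenbeck process z
    {Ω : Type*} [MeasurableSpace Ω] (P : Measure Ω) [IsProbabilityMeasure P]
    (m : ℕ) (θ : ℝ → Ω → Ω)
    (hθ0 : θ 0 = id) (hθadd : ∀ s t : ℝ, θ (s + t) = θ s ∘ θ t)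
    (hθmp : ∀ t, MeasurePreserving (θ t) P P)
    (W : Ω → ℝ → Fin m → ℝ)
    (hW0 : ∀ ω, W ω 0 = 0) (hWcont : ∀ ω, Continuous (W ω))
    (hWshift : ∀ t ω s, W (θ t ω) s = W ω (s + t) - W ω t)
    (g : Fin m → 𝕏) (zX : Ω → 𝕏)
    (hzX : ∀ ω, zX ω =
      ∑ j : Fin m, (-μ * ∫ s in Iic (0:ℝ), Real.exp (μ * s) * W ω s j) • g j)
    (zSeg : ℝ → Ω → Lp 𝕏 2 ν)
    (hzSeg : ∀ t ω, ⇑(zSeg t ω) =ᵐ[ν] fun ξ => zX (θ (t + ξ) ω))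
    (Az : ℝ → Ω → 𝕏)
    -- Hypothesis A4 and the nonlinearity F
    (f : Lp 𝕏 2 ν → 𝕏) (Lf : ℝ≥0) (hf : LipschitzWith Lf f) (hf0 : f 0 = 0)
    (F : ℝ → Ω → (Lp 𝕏 2 ν × 𝕏) → (Lp 𝕏 2 ν × 𝕏))
    (hF : ∀ t ω V, F t ω V = (0, L (zSeg t ω) + f (V.1 + zSeg t ω) + Az t ω))
    -- the forward mild-solution cocycle V of the auxiliary equation
    (V : Ω → (Lp 𝕏 2 ν × 𝕏) → ℝ → (Lp 𝕏 2 ν × 𝕏))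
    (hV : ∀ ω ψ, ContinuousOn (V ω ψ) (Ici 0) ∧ V ω ψ 0 = ψ ∧
      ∀ t ≥ (0:ℝ), V ω ψ t = St t ψ + ∫ s in (0:ℝ)..t, St (t - s) (F s ω (V ω ψ s)))
    (hVcoc : ∀ ω ψ s t, 0 ≤ s → 0 ≤ t → V ω ψ (t + s) = V (θ s ω) (V ω ψ s) t)
    -- N^u(ω) and the Lipschitz unstable manifold M^u(ω) = P₁N^u(ω) of the random PDE
    (η : ℝ) (Nu : Ω → Set (Lp 𝕏 2 ν × 𝕏))
    (hNu : ∀ ω, Nu ω = {ψ | ∃ Vb : ℝ → Lp 𝕏 2 ν × 𝕏,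
      ContinuousOn Vb (Iic 0) ∧ Vb 0 = ψ ∧
      (∀ s t : ℝ, s ≤ t → t ≤ 0 →
        Vb t = St (t - s) (Vb s) + ∫ r in s..t, St (t - r) (F r ω (Vb r))) ∧
      ∃ C : ℝ, ∀ t ≤ (0:ℝ), ‖Vb t‖ ≤ C * Real.exp (η * t)})
    (hu : Ω → Lp 𝕏 2 ν → Lp 𝕏 2 ν) (Chu : ℝ≥0)
    (hhu0 : ∀ ω, hu ω 0 = 0)
    (hhuLip : ∀ ω, LipschitzOnWith Chu (hu ω) (Prod.fst '' (⇑Pu '' Nu ω)))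
    (hgraph : ∀ ω, Prod.fst '' Nu ω =
      {x : Lp 𝕏 2 ν | ∃ ζ ∈ Prod.fst '' (⇑Pu '' Nu ω), x = ζ + hu ω ζ})
    (hinv : ∀ ω, ∀ ψ ∈ Nu ω, ∀ t ≥ (0:ℝ), (V ω ψ t).1 ∈ Prod.fst '' Nu (θ t ω))
    -- the splitting z(θ_·ω) = z₁ + z₂ along 𝓛 ∩ P^uH and 𝓛 ∩ P^sH
    (z₁ z₂ : Ω → Lp 𝕏 2 ν)
    (hsplit : ∀ ω, zSeg 0 ω = z₁ ω + z₂ ω ∧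
      z₁ ω ∈ Prod.fst '' (range ⇑Pu) ∧ z₂ ω ∈ Prod.fst '' (range ⇑Ps)) :
    -- M̃^u(ω) = (· + z(θ_·ω)) '' M^u(ω) is invariant under the stochastic solution map
    (∀ ω, ∀ ψ ∈ Nu ω, ∀ t ≥ (0:ℝ),
      (V ω ψ t).1 + zSeg t ω ∈
        (fun x => x + zSeg 0 (θ t ω)) '' (Prod.fst '' Nu (θ t ω))) ∧
    -- it is the graph of a Lipschitz function over the translated base
    (∃ C' : ℝ≥0, ∀ ω,
      ((fun x => x + zSeg 0 ω) '' (Prod.fst '' Nu ω) =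
        {x : Lp 𝕏 2 ν | ∃ ζb ∈ (fun ζ => ζ + z₁ ω) '' (Prod.fst '' (⇑Pu '' Nu ω)),
          x = ζb + (hu ω (ζb - z₁ ω) + z₂ ω)}) ∧
      LipschitzOnWith C' (fun ζb => hu ω (ζb - z₁ ω) + z₂ ω)
        ((fun ζ => ζ + z₁ ω) '' (Prod.fst '' (⇑Pu '' Nu ω)))) ∧
    -- and if h^u(·,ω) is C^k then the translated graph map is C^k as well
    (∀ k : ℕ, 1 ≤ k →
      (∀ ω, ContDiffOn ℝ k (hu ω) (Prod.fst '' (⇑Pu '' Nu ω))) →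
      ∀ ω, ContDiffOn ℝ k (fun ζb => hu ω (ζb - z₁ ω) + z₂ ω)
        ((fun ζ => ζ + z₁ ω) '' (Prod.fst '' (⇑Pu '' Nu ω)))) :=
  stmt10_general ν L Pu Ps θ hθadd zX zSeg hzSeg V Nu hu Chu hhuLip hgraph hinv z₁ z₂ hsplit
end
end

section
/- Let μ > 0 and let ω : ℝ → ℝ be continuous with ω(0) = 0 and sublinear growth, i.e. |ω(t)|/|t| → 0 as |t| → ∞. Define z(t) := −μ ∫_{−∞}^0 e^{μs} (ω(t+s) − ω(t)) ds (the integral converging absolutely). Then z is continuous on ℝ and satisfies the pathwise Ornstein–Uhlenbeck identity z(t) = z(0) − μ ∫₀^t z(s) ds + ω(t) for all t ∈ ℝ; that is, z is a stationary (with respect to the shift θ_tω(·) = ω(·+t) − ω(t)) solution of dz + μz dt = dω. -/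
/-!
Sublinear growth of `ω` gives a bound `|ω t| ≤ C + |t|`, so every integral against `e^{μ s}` on
`(-∞, a]` converges. Substituting `u = t + s`, `z t = ω t - μ G t` with
`G t = e^{-μ t} ∫_{-∞}^t e^{μ u} ω u du`, and the product rule gives `G' = ω - μ G = z`.
Integrating `G' = z` over `[0, t]` and using `ω 0 = 0`, i.e. `z 0 = -μ G 0`, gives the identity.
-/

open MeasureTheory Set Filter
open Real Topology

lemma exists_abs_le_add_of_eventually_abs_le {X : Type*} [TopologicalSpace X] {f h : X → ℝ}
    (hf : Continuous f) (hh : ∀ x, 0 ≤ h x) (hev : ∀ᶠ x in cocompact X, |f x| ≤ h x) :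
    ∃ C, ∀ x, |f x| ≤ C + h x := by
  obtain ⟨K, hK, hKc⟩ := mem_cocompact.mp hev
  obtain ⟨C, hC⟩ := hK.exists_bound_of_continuousOn hf.continuousOn
  refine ⟨max C 0, fun x => ?_⟩
  by_cases hx : x ∈ K
  · linarith [hC x hx, le_max_left C 0, hh x, Real.norm_eq_abs (f x)]
  · linarith [show |f x| ≤ h x from hKc hx, le_max_right C 0]

lemma eventually_abs_le_abs_of_tendsto_abs_div_abs {f : ℝ → ℝ}
    (hf : Tendsto (fun t => |f t| / |t|) (cocompact ℝ) (𝓝 0)) :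
    ∀ᶠ t in cocompact ℝ, |f t| ≤ |t| := by
  filter_upwards [hf.eventually_lt_const one_pos, isCompact_singleton.compl_mem_cocompact]
    with t ht ht0
  exact ((div_lt_one (abs_pos.mpr ht0)).mp ht).le

lemma exists_abs_le_add_abs_of_tendsto_abs_div_abs {f : ℝ → ℝ} (hf : Continuous f)
    (hsub : Tendsto (fun t => |f t| / |t|) (cocompact ℝ) (𝓝 0)) :
    ∃ C, ∀ t, |f t| ≤ C + |t| :=
  exists_abs_le_add_of_eventually_abs_le hf abs_nonneg
    (eventually_abs_le_abs_of_tendsto_abs_div_abs hsub)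

lemma abs_le_abs_add_mul_exp_of_le {μ a u : ℝ} (hμ : 0 < μ) (hu : u ≤ a) :
    |u| ≤ |a| + 2 / μ * exp (-(μ / 2 * u)) := by
  rcases le_total 0 u with h | h
  · have : 0 ≤ 2 / μ * exp (-(μ / 2 * u)) := by positivity
    rw [abs_of_nonneg h]
    linarith [le_abs_self a]
  · -- `x ≤ exp x` at `x = -μ u / 2`
    have hx := add_one_le_exp (-(μ / 2 * u))
    have : |u| = 2 / μ * (-(μ / 2 * u)) := by rw [abs_of_nonpos h]; field_simp
    rw [this]
    nlinarith [abs_nonneg a, div_pos two_pos hμ]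

lemma integrableOn_Iic_exp_mul_of_abs_le_add_abs {μ C : ℝ} {f : ℝ → ℝ} (hμ : 0 < μ)
    (hf : Continuous f) (hbound : ∀ u, |f u| ≤ C + |u|) (a : ℝ) :
    IntegrableOn (fun u => exp (μ * u) * f u) (Iic a) := by
  refine Integrable.mono' (((integrableOn_exp_mul_Iic hμ a).const_mul (C + |a|)).add
      ((integrableOn_exp_mul_Iic (half_pos hμ) a).const_mul (2 / μ)))
    (by fun_prop : Continuous fun u => exp (μ * u) * f u).aestronglyMeasurable.restrict ?_
  rw [ae_restrict_iff' measurableSet_Iic]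
  refine ae_of_all _ fun u (hu : u ≤ a) => ?_
  have hsplit : exp (μ * u) * exp (-(μ / 2 * u)) = exp (μ / 2 * u) := by
    rw [← exp_add]; ring_nf
  calc ‖exp (μ * u) * f u‖ = exp (μ * u) * |f u| := by
        rw [Real.norm_eq_abs, abs_mul, abs_of_pos (exp_pos _)]
    _ ≤ exp (μ * u) * (C + (|a| + 2 / μ * exp (-(μ / 2 * u)))) := by
        gcongr
        exact (hbound u).trans (by linarith [abs_le_abs_add_mul_exp_of_le (a := a) hμ hu])
    _ = (C + |a|) * exp (μ * u) + 2 / μ * exp (μ / 2 * u) := by rw [← hsplit]; ring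

lemma setIntegral_Iic_zero_comp_add_left (g : ℝ → ℝ) (t : ℝ) :
    ∫ s in Iic 0, g (t + s) = ∫ u in Iic t, g u := by
  have hpre : (t + ·) ⁻¹' Iic t = Iic 0 := by ext s; simp
  rw [← hpre]
  exact (measurePreserving_add_left volume t).setIntegral_preimage_emb
    (Homeomorph.addLeft t).measurableEmbedding g (Iic t)

lemma hasDerivAt_setIntegral_Iic {g : ℝ → ℝ} (hg : Continuous g)
    (hint : ∀ t, IntegrableOn g (Iic t)) (t : ℝ) :
    HasDerivAt (fun t => ∫ u in Iic t, g u) (g t) t := by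
  have hsplit : (fun t => ∫ u in Iic t, g u)
      = fun t => (∫ u in Iic 0, g u) + ∫ u in 0..t, g u := by
    ext t
    rw [← intervalIntegral.integral_Iic_sub_Iic (hint 0) (hint t)]
    ring
  rw [hsplit]
  exact ((hg.integral_hasStrictDerivAt 0 t).hasDerivAt).const_add _

section OrnsteinUhlenbeck

variable {μ C : ℝ} {ω : ℝ → ℝ}

lemma integrableOn_Iic_exp_mul_comp_add_sub (hμ : 0 < μ) (hω : Continuous ω)
    (hbound : ∀ t, |ω t| ≤ C + |t|) (t c : ℝ) :
    IntegrableOn (fun s => exp (μ * s) * (ω (t + s) - c)) (Iic 0) := by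
  refine integrableOn_Iic_exp_mul_of_abs_le_add_abs (C := C + |t| + |c|) hμ (by fun_prop)
    (fun s => ?_) 0
  calc |ω (t + s) - c| ≤ |ω (t + s)| + |c| := abs_sub _ _
    _ ≤ C + |t + s| + |c| := by linarith [hbound (t + s)]
    _ ≤ C + |t| + |c| + |s| := by linarith [abs_add_le t s]

lemma setIntegral_Iic_exp_mul_comp_add_sub (hμ : 0 < μ) (hω : Continuous ω)
    (hbound : ∀ t, |ω t| ≤ C + |t|) (t : ℝ) :
    ∫ s in Iic 0, exp (μ * s) * (ω (t + s) - ω t)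
      = exp (-(μ * t)) * (∫ u in Iic t, exp (μ * u) * ω u) - ω t / μ := by
  have hshift : ∫ s in Iic 0, exp (μ * s) * ω (t + s)
      = exp (-(μ * t)) * ∫ u in Iic t, exp (μ * u) * ω u := by
    rw [← setIntegral_Iic_zero_comp_add_left _ t, ← integral_const_mul]
    congr 1 with s
    rw [← mul_assoc, ← exp_add]
    ring_nf
  have hconst : ∫ s in Iic (0 : ℝ), exp (μ * s) * ω t = ω t / μ := by
    rw [integral_mul_const, integral_exp_mul_Iic hμ, mul_zero, exp_zero]
    ring
  simp_rw [mul_sub]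
  rw [integral_sub, hshift, hconst]
  · simpa [IntegrableOn] using integrableOn_Iic_exp_mul_comp_add_sub hμ hω hbound t 0
  · exact (integrableOn_exp_mul_Iic hμ 0).mul_const (ω t)

lemma hasDerivAt_exp_neg_mul_mul_setIntegral_Iic (hμ : 0 < μ) (hω : Continuous ω)
    (hbound : ∀ t, |ω t| ≤ C + |t|) (t : ℝ) :
    HasDerivAt (fun t => exp (-(μ * t)) * ∫ u in Iic t, exp (μ * u) * ω u)
      (ω t - μ * (exp (-(μ * t)) * ∫ u in Iic t, exp (μ * u) * ω u)) t := by
  have hint : ∀ a, IntegrableOn (fun u => exp (μ * u) * ω u) (Iic a) :=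
    integrableOn_Iic_exp_mul_of_abs_le_add_abs hμ hω hbound
  have hexp : HasDerivAt (fun t => exp (-(μ * t))) (-μ * exp (-(μ * t))) t := by
    simpa [mul_comm] using ((hasDerivAt_id t).const_mul μ).neg.exp
  refine (hexp.mul (hasDerivAt_setIntegral_Iic (by fun_prop) hint t)).congr_deriv ?_
  rw [← mul_assoc, ← exp_add, neg_add_cancel, exp_zero]
  ring

end OrnsteinUhlenbeck

/-- pathwise Ornstein–Uhlenbeck identity for the stationary solution
`z(t) = -μ ∫_{-∞}^0 e^{μ s} (θ_t ω)(s) ds`, where `θ_t ω (·) = ω(·+t) - ω(t)` is the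
Wiener shift.  For a continuous path `ω` with `ω 0 = 0` and sublinear growth, `z` is
continuous (the integral converging absolutely) and satisfies
`z(t) = z(0) - μ ∫₀^t z(s) ds + ω(t)` for all `t`. -/
theorem stmt15 (μ : ℝ) (hμ : 0 < μ) (ω : ℝ → ℝ) (hcont : Continuous ω) (h0 : ω 0 = 0)
    (hsub : Tendsto (fun t => |ω t| / |t|) (cocompact ℝ) (nhds 0))
    (z : ℝ → ℝ)
    (hz : ∀ t, z t = -μ * ∫ s in Iic (0:ℝ), Real.exp (μ * s) * (ω (t + s) - ω t)) :
    (∀ t, IntegrableOn (fun s => Real.exp (μ * s) * (ω (t + s) - ω t)) (Iic (0:ℝ))) ∧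
      Continuous z ∧
      ∀ t : ℝ, z t = z 0 - μ * (∫ s in (0:ℝ)..t, z s) + ω t := by
  obtain ⟨C, hC⟩ := exists_abs_le_add_abs_of_tendsto_abs_div_abs hcont hsub
  set G : ℝ → ℝ := fun t => exp (-(μ * t)) * ∫ u in Iic t, exp (μ * u) * ω u
  have hzG : ∀ t, z t = ω t - μ * G t := fun t => by
    rw [hz, setIntegral_Iic_exp_mul_comp_add_sub hμ hcont hC]
    field_simp
    ring
  have hG : ∀ t, HasDerivAt G (z t) t := fun t => by
    rw [hzG]
    exact hasDerivAt_exp_neg_mul_mul_setIntegral_Iic hμ hcont hC t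
  have hzc : Continuous z := by
    rw [funext hzG]
    exact hcont.sub (continuous_const.mul
      (continuous_iff_continuousAt.mpr fun t => (hG t).continuousAt))
  refine ⟨fun t => integrableOn_Iic_exp_mul_comp_add_sub hμ hcont hC t (ω t), hzc, fun t => ?_⟩
  rw [intervalIntegral.integral_eq_sub_of_hasDerivAt (fun s _ => hG s) (hzc.intervalIntegrable 0 t),
    hzG t, hzG 0, h0]
  ring
end
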